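/- arXiv:0902.3804 — 2 statements merged into one kernel-verified Lean document; each statement's English description precedes it below -/
import Mathlib

section
/- For every 𝔭 > 0, inf{ E(v) : v ∈ Z₀(ℝ) with P(v) = 𝔭 } = 0. -/
open MeasureTheory Complex Filter
open scoped ENNReal Topology

/-- One-dimensional Ginzburg–Landau energy. -/
noncomputable def glEnergy (v : ℝ → ℂ) : ℝ≥0∞ :=
  (1 / 2) * ∫⁻ x : ℝ, ENNReal.ofReal (‖deriv v x‖ ^ 2) +
  (1 / 4) * ∫⁻ x : ℝ, ENNReal.ofReal ((1 - ‖v x‖ ^ 2) ^ 2)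

/-- `v ∈ H¹_loc(ℝ, ℂ)`. -/
def MemH1loc (v : ℝ → ℂ) : Prop :=
  Continuous v ∧
  (∀ a b : ℝ, IntegrableOn (fun x => ‖deriv v x‖ ^ 2) (Set.Icc a b)) ∧
  ∀ x : ℝ, v x = v 0 + ∫ t in (0 : ℝ)..x, deriv v t

/-- `v ∈ Z₀(ℝ)`: `v ∈ H¹_loc`, `E(v) < 2√2/3`, and `v` has limits at `±∞`. -/
def MemZ0 (v : ℝ → ℂ) : Prop :=
  MemH1loc v ∧ glEnergy v < ENNReal.ofReal (2 * Real.sqrt 2 / 3) ∧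
  (∃ L : ℂ, Tendsto v atTop (𝓝 L)) ∧ (∃ L : ℂ, Tendsto v atBot (𝓝 L))

/-- `P(v) = q` where `P(v) = p(v) - (φ(+∞) - φ(-∞))/2` is the (non-renormalized)
momentum, computed through a continuous phase lifting `φ` of `v`:
`p(v) = (1/2)∫ (1 - |v|²) φ'`, and `φ(±∞)` are the limits of `φ` at `±∞`. -/
def HasMomentumP (v : ℝ → ℂ) (q : ℝ) : Prop :=
  ∃ φ : ℝ → ℝ, Continuous φ ∧
    (∀ x : ℝ, v x = ((‖v x‖ : ℝ) : ℂ) * Complex.exp ((φ x : ℝ) * Complex.I)) ∧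
    Integrable (fun x => (1 - ‖v x‖ ^ 2) * deriv φ x) ∧
    ∃ φp φm : ℝ, Tendsto φ atTop (𝓝 φp) ∧ Tendsto φ atBot (𝓝 φm) ∧
      (1 / 2) * (∫ x : ℝ, (1 - ‖v x‖ ^ 2) * deriv φ x) - (1 / 2) * (φp - φm) = q

/-! A unimodular map `exp (i φ)` has no potential energy, and its momentum is
`-(φ(+∞) - φ(-∞)) / 2`, determined by the total phase jump alone. Stretching the twist
`φ = a · arctan (x / T)` over the length scale `T` keeps that jump equal to `a π` while its
kinetic energy is at most `a² π / T`, so the energy at fixed momentum can be made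
arbitrarily small. -/

noncomputable def phaseMap (φ : ℝ → ℝ) (x : ℝ) : ℂ := exp (φ x * I)

section PhaseMap

variable {φ φ' : ℝ → ℝ}

lemma norm_phaseMap (φ : ℝ → ℝ) (x : ℝ) : ‖phaseMap φ x‖ = 1 :=
  norm_exp_ofReal_mul_I (φ x)

lemma hasDerivAt_phaseMap {x d : ℝ} (h : HasDerivAt φ d x) :
    HasDerivAt (phaseMap φ) (phaseMap φ x * (d * I)) x :=
  (h.ofReal_comp.mul_const I).cexp

lemma norm_deriv_phaseMap (hφ : ∀ x, HasDerivAt φ (φ' x) x) (x : ℝ) :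
    ‖deriv (phaseMap φ) x‖ = |φ' x| := by
  simp [(hasDerivAt_phaseMap (hφ x)).deriv, norm_phaseMap]

lemma continuous_phaseMap (hφ : Continuous φ) : Continuous (phaseMap φ) :=
  continuous_exp.comp ((continuous_ofReal.comp hφ).mul continuous_const)

lemma tendsto_phaseMap {l : Filter ℝ} {c : ℝ} (h : Tendsto φ l (𝓝 c)) :
    Tendsto (phaseMap φ) l (𝓝 (exp (c * I))) :=
  (continuous_exp.tendsto _).comp (((continuous_ofReal.tendsto _).comp h).mul_const I)

lemma memH1loc_phaseMap (hφ : ∀ x, HasDerivAt φ (φ' x) x) (hφ' : Continuous φ') :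
    MemH1loc (phaseMap φ) := by
  have hderiv : deriv (phaseMap φ) = fun x => phaseMap φ x * (φ' x * I) :=
    funext fun x => (hasDerivAt_phaseMap (hφ x)).deriv
  have hcont : Continuous (deriv (phaseMap φ)) := by
    rw [hderiv]
    exact (continuous_phaseMap (continuous_iff_continuousAt.2 fun x => (hφ x).continuousAt)).mul
      ((continuous_ofReal.comp hφ').mul continuous_const)
  refine ⟨continuous_iff_continuousAt.2 fun x => (hasDerivAt_phaseMap (hφ x)).continuousAt,
    fun a b => (hcont.norm.pow 2).integrableOn_Icc, fun x => ?_⟩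
  rw [intervalIntegral.integral_eq_sub_of_hasDerivAt
    (fun t _ => (hasDerivAt_phaseMap (hφ t)).congr_deriv (congrFun hderiv t).symm)
    (hcont.intervalIntegrable 0 x)]
  ring

lemma glEnergy_phaseMap (hφ : ∀ x, HasDerivAt φ (φ' x) x) :
    glEnergy (phaseMap φ) = 1 / 2 * ∫⁻ x, ENNReal.ofReal (φ' x ^ 2) := by
  simp [glEnergy, norm_deriv_phaseMap hφ, norm_phaseMap]

lemma hasMomentumP_phaseMap (hφ : Continuous φ) {φp φm : ℝ} (htop : Tendsto φ atTop (𝓝 φp))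
    (hbot : Tendsto φ atBot (𝓝 φm)) : HasMomentumP (phaseMap φ) (-(φp - φm) / 2) := by
  refine ⟨φ, hφ, fun x => ?_, ?_, φp, φm, htop, hbot, ?_⟩ <;>
    simp only [norm_phaseMap, one_pow, sub_self, zero_mul]
  · simp [phaseMap]
  · exact integrable_zero _ _ _
  · simp only [integral_zero]
    ring

lemma memZ0_phaseMap (hφ : ∀ x, HasDerivAt φ (φ' x) x) (hφ' : Continuous φ') {φp φm : ℝ}
    (htop : Tendsto φ atTop (𝓝 φp)) (hbot : Tendsto φ atBot (𝓝 φm))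
    (hE : glEnergy (phaseMap φ) < ENNReal.ofReal (2 * Real.sqrt 2 / 3)) :
    MemZ0 (phaseMap φ) :=
  ⟨memH1loc_phaseMap hφ hφ', hE, ⟨_, tendsto_phaseMap htop⟩,
    ⟨_, tendsto_phaseMap hbot⟩⟩

end PhaseMap

section Twist

open Real

noncomputable def twistPhase (a T x : ℝ) : ℝ := a * Real.arctan (x / T)

variable (a : ℝ) {T : ℝ}

lemma hasDerivAt_twistPhase (x : ℝ) :
    HasDerivAt (twistPhase a T) (a / T * (1 + (x / T) ^ 2)⁻¹) x := by
  refine (((hasDerivAt_arctan' (x / T)).comp x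
    ((hasDerivAt_id x).div_const T)).const_mul a).congr_deriv ?_
  ring

lemma continuous_deriv_twistPhase :
    Continuous fun x => a / T * (1 + (x / T) ^ 2)⁻¹ :=
  continuous_const.mul <| (continuous_const.add ((continuous_id.div_const T).pow 2)).inv₀
    fun x => (by positivity : (0 : ℝ) < 1 + (x / T) ^ 2).ne'

lemma tendsto_twistPhase_atTop (hT : 0 < T) :
    Tendsto (twistPhase a T) atTop (𝓝 (a * (π / 2))) :=
  ((tendsto_arctan_atTop.mono_right nhdsWithin_le_nhds).comp
    (tendsto_id.atTop_div_const hT)).const_mul a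

lemma tendsto_twistPhase_atBot (hT : 0 < T) :
    Tendsto (twistPhase a T) atBot (𝓝 (a * -(π / 2))) :=
  ((tendsto_arctan_atBot.mono_right nhdsWithin_le_nhds).comp
    (tendsto_id.atBot_div_const hT)).const_mul a

lemma hasMomentumP_twistPhase (hT : 0 < T) :
    HasMomentumP (phaseMap (twistPhase a T)) (-(a * π / 2)) := by
  convert hasMomentumP_phaseMap
    (continuous_iff_continuousAt.2 fun x => (hasDerivAt_twistPhase a x).continuousAt)
    (tendsto_twistPhase_atTop a hT) (tendsto_twistPhase_atBot a hT) using 1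
  ring

lemma lintegral_sq_deriv_twistPhase_le (hT : 0 < T) :
    ∫⁻ x, ENNReal.ofReal ((a / T * (1 + (x / T) ^ 2)⁻¹) ^ 2) ≤
      ENNReal.ofReal (a ^ 2 * π / T) := by
  -- `(1 + y²)⁻² ≤ (1 + y²)⁻¹`, whose integral is `π`
  set g : ℝ → ℝ := fun x => (a / T) ^ 2 * (1 + (x / T) ^ 2)⁻¹
  have hg : Integrable g := (integrable_inv_one_add_sq.comp_div hT.ne').const_mul _
  have hle : ∀ x, (a / T * (1 + (x / T) ^ 2)⁻¹) ^ 2 ≤ g x := fun x => by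
    have hw : (1 + (x / T) ^ 2)⁻¹ ≤ 1 := inv_le_one_of_one_le₀ (by nlinarith)
    have hw0 : 0 ≤ (1 + (x / T) ^ 2)⁻¹ := by positivity
    calc (a / T * (1 + (x / T) ^ 2)⁻¹) ^ 2
        = (a / T) ^ 2 * (1 + (x / T) ^ 2)⁻¹ * (1 + (x / T) ^ 2)⁻¹ := by ring
      _ ≤ (a / T) ^ 2 * (1 + (x / T) ^ 2)⁻¹ * 1 := by gcongr
      _ = g x := mul_one _
  calc ∫⁻ x, ENNReal.ofReal ((a / T * (1 + (x / T) ^ 2)⁻¹) ^ 2)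
      ≤ ∫⁻ x, ENNReal.ofReal (g x) := lintegral_mono fun x => ENNReal.ofReal_le_ofReal (hle x)
    _ = ENNReal.ofReal (∫ x, g x) :=
        (ofReal_integral_eq_lintegral_ofReal hg (Eventually.of_forall fun x => by positivity)).symm
    _ = ENNReal.ofReal (a ^ 2 * π / T) := by
        rw [integral_const_mul, Measure.integral_comp_div (fun y : ℝ => (1 + y ^ 2)⁻¹) T,
          integral_univ_inv_one_add_sq, abs_of_pos hT, smul_eq_mul]
        field_simp

lemma tendsto_glEnergy_twistPhase :
    Tendsto (fun T => glEnergy (phaseMap (twistPhase a T))) atTop (𝓝 0) := by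
  have hbound : Tendsto (fun T => ENNReal.ofReal (a ^ 2 * π / T)) atTop (𝓝 0) := by
    rw [← ENNReal.ofReal_zero]
    exact ENNReal.tendsto_ofReal (tendsto_const_nhds.div_atTop tendsto_id)
  refine tendsto_of_tendsto_of_tendsto_of_le_of_le' tendsto_const_nhds hbound
    (Eventually.of_forall fun T => zero_le) ?_
  filter_upwards [eventually_gt_atTop 0] with T hT
  rw [glEnergy_phaseMap (hasDerivAt_twistPhase a)]
  exact (mul_le_of_le_one_left' (by norm_num)).trans (lintegral_sq_deriv_twistPhase_le a hT)

end Twist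

theorem inf_energy_fixed_momentum_Z0_general (𝔭 : ℝ) :
    sInf {e : ℝ≥0∞ | ∃ v : ℝ → ℂ, MemZ0 v ∧ HasMomentumP v 𝔭 ∧ e = glEnergy v} = 0 := by
  set a := -(2 * 𝔭 / Real.pi)
  have hE := tendsto_glEnergy_twistPhase a
  have hthreshold : (0 : ℝ≥0∞) < ENNReal.ofReal (2 * Real.sqrt 2 / 3) := by simp
  refine le_antisymm (ge_of_tendsto hE ?_) bot_le
  filter_upwards [eventually_gt_atTop 0, hE.eventually_lt_const hthreshold] with T hT hET
  refine sInf_le ⟨_, memZ0_phaseMap (hasDerivAt_twistPhase a)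
    (continuous_deriv_twistPhase a) (tendsto_twistPhase_atTop a hT)
    (tendsto_twistPhase_atBot a hT) hET, ?_, rfl⟩
  convert hasMomentumP_twistPhase a hT using 1
  simp only [a]
  field_simp

/-- For every `𝔭 > 0`, the infimum of the energy over `Z₀(ℝ)` maps with momentum
`P(v) = 𝔭` equals `0`. -/
theorem inf_energy_fixed_momentum_Z0 (𝔭 : ℝ) (h𝔭 : 0 < 𝔭) :
    sInf {e : ℝ≥0∞ | ∃ v : ℝ → ℂ, MemZ0 v ∧ HasMomentumP v 𝔭 ∧ e = glEnergy v} = 0 :=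
  inf_energy_fixed_momentum_Z0_general 𝔭
end

section
/- Let 𝔮 ∈ ℝ with 0 < |𝔮| ≤ 1/32 and let μ ∈ ℝ with 0 < μ ≤ 1/4. Then there exist a real number ℓ > 1 and functions ρ, ψ : [0, ℓ] → ℝ of class H¹ with ρ > 0 such that, setting w = ρ·exp(iψ) : [0, ℓ] → ℂ, one has: w(0) = w(ℓ); 0 < |1 − |w(0)|| ≤ μ; 𝔮 = (1/2)∫₀^ℓ (1 − ρ(x)²)·ψ'(x) dx; and (1/2)∫₀^ℓ |w'(x)|² dx + (1/4)∫₀^ℓ (1 − |w(x)|²)² dx ≤ 14·|𝔮|. -/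
open MeasureTheory Complex

/-!
A loop of constant modulus `r = √(1 - |a|)` winding `k` times, `w(x) = r e^{iax}` on
`[0, ℓ]` with `ℓ = 2πk / |a|`, carries momentum `ℓ |a| a / 2 = πk a` and has energy
`ℓ r² a² / 2 + ℓ a² / 4 = πk|a| (3/2 - |a|)`. Taking `k = ⌈1/μ⌉` and `a = 𝔮 / (πk)` gives
momentum `𝔮`, energy at most `3|𝔮|/2`, and `|1 - r| ≤ 1 - r² = |a| ≤ μ`.
-/

section WindingLoop

variable (a : ℝ)

lemma norm_ofReal_mul_exp_mul_I {r : ℝ} (hr : 0 ≤ r) (x : ℝ) :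
    ‖(r : ℂ) * exp ((a * x : ℝ) * I)‖ = r := by
  rw [norm_mul, norm_exp_ofReal_mul_I, norm_real, Real.norm_of_nonneg hr, mul_one]

lemma hasDerivAt_ofReal_mul_exp_mul_I (r x : ℝ) :
    HasDerivAt (fun y : ℝ => (r : ℂ) * exp ((a * y : ℝ) * I))
      ((r : ℂ) * (exp ((a * x : ℝ) * I) * (a * I))) x := by
  have hphase : HasDerivAt (fun y : ℝ => ((a * y : ℝ) : ℂ) * I) (a * I) x := by
    simpa using (((hasDerivAt_id x).const_mul a).ofReal_comp).mul_const I
  exact hphase.cexp.const_mul _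

lemma norm_deriv_ofReal_mul_exp_mul_I {r : ℝ} (hr : 0 ≤ r) (x : ℝ) :
    ‖deriv (fun y : ℝ => (r : ℂ) * exp ((a * y : ℝ) * I)) x‖ = r * |a| := by
  rw [(hasDerivAt_ofReal_mul_exp_mul_I a r x).deriv, norm_mul, norm_mul, norm_mul,
    norm_exp_ofReal_mul_I, norm_I, norm_real, norm_real, Real.norm_of_nonneg hr,
    Real.norm_eq_abs, one_mul, mul_one]

lemma ofReal_mul_exp_mul_I_periodic (r : ℝ) {ℓ : ℝ} {n : ℤ} (h : a * ℓ = 2 * Real.pi * n) :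
    (r : ℂ) * exp ((a * 0 : ℝ) * I) = (r : ℂ) * exp ((a * ℓ : ℝ) * I) := by
  rw [h, mul_zero, ofReal_zero, zero_mul, exp_zero]
  push_cast
  rw [show 2 * (Real.pi : ℂ) * n * I = n * (2 * Real.pi * I) by ring, exp_int_mul_two_pi_mul_I]

variable (ℓ : ℝ)

lemma integral_norm_deriv_ofReal_mul_exp_mul_I_sq {r : ℝ} (hr : 0 ≤ r) :
    ∫ x in (0 : ℝ)..ℓ, ‖deriv (fun y : ℝ => (r : ℂ) * exp ((a * y : ℝ) * I)) x‖ ^ 2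
      = ℓ * (r ^ 2 * a ^ 2) := by
  simp only [norm_deriv_ofReal_mul_exp_mul_I a hr, mul_pow, sq_abs,
    intervalIntegral.integral_const, sub_zero, smul_eq_mul]

lemma integral_one_sub_norm_ofReal_mul_exp_mul_I_sq_sq {r : ℝ} (hr : 0 ≤ r) :
    ∫ x in (0 : ℝ)..ℓ, (1 - ‖(r : ℂ) * exp ((a * x : ℝ) * I)‖ ^ 2) ^ 2
      = ℓ * (1 - r ^ 2) ^ 2 := by
  simp only [norm_ofReal_mul_exp_mul_I a hr, intervalIntegral.integral_const, sub_zero,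
    smul_eq_mul]

end WindingLoop

lemma exists_winding_parameters {𝔮 μ : ℝ} (h𝔮0 : 0 < |𝔮|) (h𝔮 : |𝔮| ≤ 1 / 32)
    (hμ0 : 0 < μ) :
    ∃ ℓ r a : ℝ, ∃ n : ℤ, 1 < ℓ ∧ 0 < r ∧ 0 < |1 - r| ∧ |1 - r| ≤ μ ∧
      a * ℓ = 2 * Real.pi * n ∧ 𝔮 = 1 / 2 * (ℓ * ((1 - r ^ 2) * a)) ∧
      1 / 2 * (ℓ * (r ^ 2 * a ^ 2)) + 1 / 4 * (ℓ * (1 - r ^ 2) ^ 2) ≤ 14 * |𝔮| := by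
  set k : ℕ := ⌈1 / μ⌉₊
  have hk1 : (1 : ℝ) ≤ k := by exact_mod_cast Nat.one_le_ceil_iff.mpr (by positivity)
  have hkμ : 1 ≤ k * μ := (div_le_iff₀ hμ0).mp (Nat.le_ceil _)
  have hπ := Real.pi_gt_three
  set a := 𝔮 / (Real.pi * k)
  have ha : |a| = |𝔮| / (Real.pi * k) := by
    rw [abs_div, abs_of_pos (by positivity : 0 < Real.pi * k)]
  have ha0 : 0 < |a| := by rw [ha]; positivity
  have haμ : |a| ≤ μ := by
    rw [ha, div_le_iff₀ (by positivity)]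
    nlinarith
  have ha1 : |a| < 1 := by
    rw [ha, div_lt_one (by positivity)]
    nlinarith
  set r := Real.sqrt (1 - |a|)
  have hr2 : r ^ 2 = 1 - |a| := Real.sq_sqrt (by linarith)
  have hr0 : 0 < r := Real.sqrt_pos.mpr (by linarith)
  have hr1 : r < 1 := by nlinarith
  have hkq : Real.pi * k * |a| = |𝔮| := by rw [ha]; field_simp
  set ℓ := 2 * Real.pi * k / |a|
  have hℓa : ℓ * |a| = 2 * Real.pi * k := div_mul_cancel₀ _ ha0.ne'
  have hqa : 𝔮 = Real.pi * k * a := (mul_div_cancel₀ 𝔮 (by positivity)).symm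
  obtain ⟨n, hn⟩ : ∃ n : ℤ, a * ℓ = 2 * Real.pi * n := by
    rcases abs_choice a with h | h
    · exact ⟨k, by push_cast; rw [h] at hℓa; linarith⟩
    · exact ⟨-k, by push_cast; rw [h] at hℓa; linarith⟩
  have henergy : 1 / 2 * (ℓ * (r ^ 2 * a ^ 2)) + 1 / 4 * (ℓ * (1 - r ^ 2) ^ 2)
      = |𝔮| * (3 / 2 - |a|) := by
    rw [hr2, ← sq_abs a]
    linear_combination (|a| * (1 - |a|) / 2 + |a| / 4) * hℓa + (3 / 2 - |a|) * hkq
  refine ⟨ℓ, r, a, n, ?_, hr0, ?_, ?_, hn, ?_, ?_⟩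
  · rw [lt_div_iff₀ ha0]
    nlinarith
  · rw [abs_of_pos (sub_pos.2 hr1)]
    linarith
  · rw [abs_of_pos (sub_pos.2 hr1)]
    nlinarith
  · rw [hr2]
    linear_combination hqa - (a / 2) * hℓa
  · rw [henergy]
    nlinarith

theorem momentum_loop_construction_general (𝔮 μ : ℝ) (h𝔮0 : 0 < |𝔮|) (h𝔮 : |𝔮| ≤ 1 / 32)
    (hμ0 : 0 < μ) :
    ∃ ℓ : ℝ, 1 < ℓ ∧ ∃ ρ ψ : ℝ → ℝ,
      ContinuousOn ρ (Set.Icc 0 ℓ) ∧ ContinuousOn ψ (Set.Icc 0 ℓ) ∧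
      (∀ x ∈ Set.Icc (0 : ℝ) ℓ, 0 < ρ x) ∧
      IntegrableOn (fun x => (deriv ρ x) ^ 2 + (deriv ψ x) ^ 2) (Set.Icc 0 ℓ) ∧
      (∀ x ∈ Set.Icc (0 : ℝ) ℓ, ρ x = ρ 0 + ∫ t in (0 : ℝ)..x, deriv ρ t) ∧
      (∀ x ∈ Set.Icc (0 : ℝ) ℓ, ψ x = ψ 0 + ∫ t in (0 : ℝ)..x, deriv ψ t) ∧
      (fun x : ℝ => ((ρ x : ℝ) : ℂ) * Complex.exp ((ψ x : ℝ) * Complex.I)) 0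
        = (fun x : ℝ => ((ρ x : ℝ) : ℂ) * Complex.exp ((ψ x : ℝ) * Complex.I)) ℓ ∧
      0 < |1 - ‖((ρ 0 : ℝ) : ℂ) * Complex.exp ((ψ 0 : ℝ) * Complex.I)‖| ∧
      |1 - ‖((ρ 0 : ℝ) : ℂ) * Complex.exp ((ψ 0 : ℝ) * Complex.I)‖| ≤ μ ∧
      𝔮 = (1 / 2) * ∫ x in (0 : ℝ)..ℓ, (1 - ρ x ^ 2) * deriv ψ x ∧
      (1 / 2) * (∫ x in (0 : ℝ)..ℓ,
          ‖deriv (fun y : ℝ => ((ρ y : ℝ) : ℂ) * Complex.exp ((ψ y : ℝ) * Complex.I)) x‖ ^ 2)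
        + (1 / 4) * (∫ x in (0 : ℝ)..ℓ,
          (1 - ‖((ρ x : ℝ) : ℂ) * Complex.exp ((ψ x : ℝ) * Complex.I)‖ ^ 2) ^ 2)
        ≤ 14 * |𝔮| := by
  obtain ⟨ℓ, r, a, n, hℓ, hr0, hgap, hgapμ, hn, hmomentum, henergy⟩ :=
    exists_winding_parameters h𝔮0 h𝔮 hμ0
  have hw0 : ‖(r : ℂ) * exp ((a * 0 : ℝ) * I)‖ = r := norm_ofReal_mul_exp_mul_I a hr0.le 0
  refine ⟨ℓ, hℓ, fun _ => r, fun x => a * x, continuousOn_const, by fun_prop, fun _ _ => hr0,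
    ?_, fun _ _ => by simp, fun x _ => by simp [mul_comm], ofReal_mul_exp_mul_I_periodic a r hn,
    by simpa only [hw0] using hgap, by simpa only [hw0] using hgapμ, ?_, ?_⟩
  · simp
  · simpa [mul_left_comm] using hmomentum
  · rwa [integral_norm_deriv_ofReal_mul_exp_mul_I_sq a ℓ hr0.le,
      integral_one_sub_norm_ofReal_mul_exp_mul_I_sq_sq a ℓ hr0.le]

/-- Construction of a small loop carrying a prescribed amount of momentum:
for `0 < |𝔮| ≤ 1/32` and `0 < μ ≤ 1/4`, there exist `ℓ > 1` and an `H¹` map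
`w = ρ exp(iψ)` on `[0, ℓ]` with `w(0) = w(ℓ)`, `0 < |1 - |w(0)|| ≤ μ`,
`𝔮 = (1/2)∫₀^ℓ (1 - ρ²) ψ'`, and Ginzburg–Landau energy at most `14 |𝔮|`. -/
theorem momentum_loop_construction (𝔮 μ : ℝ) (h𝔮0 : 0 < |𝔮|) (h𝔮 : |𝔮| ≤ 1 / 32)
    (hμ0 : 0 < μ) (hμ : μ ≤ 1 / 4) :
    ∃ ℓ : ℝ, 1 < ℓ ∧ ∃ ρ ψ : ℝ → ℝ,
      ContinuousOn ρ (Set.Icc 0 ℓ) ∧ ContinuousOn ψ (Set.Icc 0 ℓ) ∧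
      (∀ x ∈ Set.Icc (0 : ℝ) ℓ, 0 < ρ x) ∧
      IntegrableOn (fun x => (deriv ρ x) ^ 2 + (deriv ψ x) ^ 2) (Set.Icc 0 ℓ) ∧
      (∀ x ∈ Set.Icc (0 : ℝ) ℓ, ρ x = ρ 0 + ∫ t in (0 : ℝ)..x, deriv ρ t) ∧
      (∀ x ∈ Set.Icc (0 : ℝ) ℓ, ψ x = ψ 0 + ∫ t in (0 : ℝ)..x, deriv ψ t) ∧
      (fun x : ℝ => ((ρ x : ℝ) : ℂ) * Complex.exp ((ψ x : ℝ) * Complex.I)) 0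
        = (fun x : ℝ => ((ρ x : ℝ) : ℂ) * Complex.exp ((ψ x : ℝ) * Complex.I)) ℓ ∧
      0 < |1 - ‖((ρ 0 : ℝ) : ℂ) * Complex.exp ((ψ 0 : ℝ) * Complex.I)‖| ∧
      |1 - ‖((ρ 0 : ℝ) : ℂ) * Complex.exp ((ψ 0 : ℝ) * Complex.I)‖| ≤ μ ∧
      𝔮 = (1 / 2) * ∫ x in (0 : ℝ)..ℓ, (1 - ρ x ^ 2) * deriv ψ x ∧
      (1 / 2) * (∫ x in (0 : ℝ)..ℓ,
          ‖deriv (fun y : ℝ => ((ρ y : ℝ) : ℂ) * Complex.exp ((ψ y : ℝ) * Complex.I)) x‖ ^ 2)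
        + (1 / 4) * (∫ x in (0 : ℝ)..ℓ,
          (1 - ‖((ρ x : ℝ) : ℂ) * Complex.exp ((ψ x : ℝ) * Complex.I)‖ ^ 2) ^ 2)
        ≤ 14 * |𝔮| :=
  momentum_loop_construction_general 𝔮 μ h𝔮0 h𝔮 hμ0
end
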